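/- arXiv:1610.02718 — 2 statements merged into one kernel-verified Lean document; each statement's English description precedes it below -/
import Mathlib

section
/- Let φ:(0,∞)→(0,∞) be C¹ with sφ(s)→0 as s→0, sφ(s)→∞ as s→∞, s↦sφ(s) strictly increasing, and ℓ−1 ≤ (sφ(s))′/φ(s) ≤ m−1 for all s>0 with 1<ℓ≤m. Define Φ(t)=∫₀^t sφ(s)ds for t≥0. Then the function t ↦ Φ(t^{1/ℓ}) is convex on (0,∞). -/
open Real Set Filter

theorem stmt0 (φ : ℝ → ℝ) (ℓ m : ℝ)
    (hℓ : 1 < ℓ) (hℓm : ℓ ≤ m)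
    (hC1 : ContDiffOn ℝ 1 φ (Set.Ioi 0))
    (hpos : ∀ s > (0:ℝ), 0 < φ s)
    (h0 : Tendsto (fun s => s * φ s) (nhdsWithin 0 (Set.Ioi 0)) (nhds 0))
    (hinf : Tendsto (fun s => s * φ s) atTop atTop)
    (hmono : StrictMonoOn (fun s => s * φ s) (Set.Ioi 0))
    (hφ3 : ∀ s > (0:ℝ), ℓ - 1 ≤ deriv (fun t => t * φ t) s / φ s ∧
        deriv (fun t => t * φ t) s / φ s ≤ m - 1)
    (Φ : ℝ → ℝ) (hΦ : ∀ t, Φ t = ∫ s in (0:ℝ)..t, s * φ s) :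
    ConvexOn ℝ (Set.Ioi (0:ℝ)) (fun t => Φ (t ^ (1/ℓ))) := by
  have hℓ0 : (0:ℝ) < ℓ := lt_trans one_pos hℓ
  set F : ℝ → ℝ := fun t => ∫ s in (0:ℝ)..t, s * φ s with hF
  have hrw : (fun t => Φ (t ^ (1/ℓ))) = fun t => F (t ^ (1/ℓ)) :=
    funext fun t => hΦ _
  rw [hrw]
  -- φ continuous and differentiable on Ioi 0
  have hφcont : ContinuousOn φ (Ioi 0) := hC1.continuousOn
  have hφdiff : ∀ s ∈ Ioi (0:ℝ), HasDerivAt φ (deriv φ s) s := by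
    intro s hs
    have := (hC1.differentiableOn one_ne_zero).differentiableAt
      (isOpen_Ioi.mem_nhds hs)
    exact this.hasDerivAt
  -- monotonicity of s ↦ s * φ s on Ici 0
  have hmono' : MonotoneOn (fun s => s * φ s) (Ici 0) := by
    intro x hx y hy hxy
    rcases eq_or_lt_of_le (mem_Ici.mp hx : (0:ℝ) ≤ x) with h0x | h0x
    · rcases eq_or_lt_of_le (mem_Ici.mp hy : (0:ℝ) ≤ y) with h0y | h0y
      · simp [← h0x, ← h0y]
      · simp only [← h0x, zero_mul]
        exact (mul_pos h0y (hpos y h0y)).le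
    · rcases eq_or_lt_of_le hxy with rfl | hlt
      · exact le_refl _
      · exact (hmono h0x (h0x.trans hlt) hlt).le
  -- FTC: derivative of F
  have hFderiv : ∀ u ∈ Ioi (0:ℝ), HasDerivAt F (u * φ u) u := by
    intro u hu
    have hint : IntervalIntegrable (fun s => s * φ s) MeasureTheory.volume 0 u := by
      apply MonotoneOn.intervalIntegrable
      rw [uIcc_of_le (le_of_lt hu)]
      exact hmono'.mono (Icc_subset_Ici_self)
    have hcontu : ContinuousAt (fun s => s * φ s) u :=
      (continuousAt_id.mul (hφcont.continuousAt (isOpen_Ioi.mem_nhds hu)))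
    have hmeas : StronglyMeasurableAtFilter (fun s => s * φ s)
        (nhds u) MeasureTheory.volume :=
      ContinuousOn.stronglyMeasurableAtFilter isOpen_Ioi
        (continuousOn_id.mul hφcont) u hu
    exact intervalIntegral.integral_hasDerivAt_right hint hmeas hcontu
  -- key inequality: (ℓ - 2) * φ s ≤ s * deriv φ s
  have hkey : ∀ s ∈ Ioi (0:ℝ), (ℓ - 2) * φ s ≤ s * deriv φ s := by
    intro s hs
    have hds : HasDerivAt (fun t => t * φ t) (1 * φ s + s * deriv φ s) s :=
      (hasDerivAt_id s).mul (hφdiff s hs)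
    have hd : deriv (fun t => t * φ t) s = φ s + s * deriv φ s := by
      rw [hds.deriv]; ring
    have h1 := (hφ3 s hs).1
    rw [hd] at h1
    rw [le_div_iff₀ (hpos s hs)] at h1
    nlinarith [hpos s hs]
  -- ψ s = s^(2-ℓ) * φ s is monotone on Ioi 0
  set ψ : ℝ → ℝ := fun s => s ^ (2 - ℓ) * φ s with hψ
  have hψderiv : ∀ s ∈ Ioi (0:ℝ), HasDerivAt ψ
      ((2 - ℓ) * s ^ (1 - ℓ) * φ s + s ^ (2 - ℓ) * deriv φ s) s := by
    intro s hs
    have h1 : HasDerivAt (fun x : ℝ => x ^ (2 - ℓ)) ((2 - ℓ) * s ^ (2 - ℓ - 1)) s :=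
      Real.hasDerivAt_rpow_const (Or.inl (ne_of_gt hs))
    have : (2 - ℓ - 1 : ℝ) = 1 - ℓ := by ring
    rw [this] at h1
    exact h1.mul (hφdiff s hs)
  have hψnon : ∀ s ∈ Ioi (0:ℝ),
      0 ≤ (2 - ℓ) * s ^ (1 - ℓ) * φ s + s ^ (2 - ℓ) * deriv φ s := by
    intro s hs
    have hs0 : (0:ℝ) < s := hs
    have hsp : (0:ℝ) < s ^ (1 - ℓ) := Real.rpow_pos_of_pos hs0 _
    have h2 : s ^ (2 - ℓ) = s ^ (1 - ℓ) * s := by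
      have he : (2 - ℓ : ℝ) = (1 - ℓ) + 1 := by ring
      rw [he, Real.rpow_add hs0, Real.rpow_one]
    rw [h2]
    have := hkey s hs
    nlinarith [hpos s hs]
  have hψmono : MonotoneOn ψ (Ioi 0) := by
    have hdo : DifferentiableOn ℝ ψ (interior (Ioi (0:ℝ))) := by
      rw [interior_Ioi]
      exact fun s hs => ((hψderiv s hs).differentiableAt).differentiableWithinAt
    apply monotoneOn_of_deriv_nonneg (convex_Ioi 0)
      (fun s hs => ((hψderiv s hs).differentiableAt).continuousAt.continuousWithinAt) hdo
    intro s hs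
    rw [interior_Ioi] at hs
    rw [(hψderiv s hs).deriv]
    exact hψnon s hs
  -- derivative of f t = F (t^(1/ℓ))
  have hfD : ∀ t ∈ Ioi (0:ℝ), HasDerivAt (fun t => F (t ^ (1/ℓ)))
      ((1/ℓ) * ψ (t ^ (1/ℓ))) t := by
    intro t ht
    have ht0 : (0:ℝ) < t := ht
    have hu : (0:ℝ) < t ^ (1/ℓ) := Real.rpow_pos_of_pos ht0 _
    have h1 : HasDerivAt (fun x : ℝ => x ^ (1/ℓ)) ((1/ℓ) * t ^ (1/ℓ - 1)) t :=
      Real.hasDerivAt_rpow_const (Or.inl (ne_of_gt ht0))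
    have h2 : HasDerivAt (fun t => F (t ^ (1/ℓ)))
        (t ^ (1/ℓ) * φ (t ^ (1/ℓ)) * ((1/ℓ) * t ^ (1/ℓ - 1))) t := by
      have h3 := HasDerivAt.comp (h₂ := F) t (hFderiv _ hu) h1
      exact h3
    convert h2 using 1
    show (1/ℓ) * ((t ^ (1/ℓ)) ^ (2 - ℓ) * φ (t ^ (1/ℓ)))
        = t ^ (1/ℓ) * φ (t ^ (1/ℓ)) * ((1/ℓ) * t ^ (1/ℓ - 1))
    have e1 : (t ^ (1/ℓ)) ^ (2 - ℓ) = t ^ ((1/ℓ) * (2 - ℓ)) :=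
      (Real.rpow_mul (le_of_lt ht0) _ _).symm
    have e2 : t ^ (1/ℓ) * t ^ (1/ℓ - 1) = t ^ ((1/ℓ) + (1/ℓ - 1)) :=
      (Real.rpow_add ht0 _ _).symm
    have e3 : (1/ℓ) * (2 - ℓ) = (1/ℓ) + (1/ℓ - 1) := by
      field_simp
      ring
    rw [e1, e3, ← e2]; ring
  -- apply convexity criterion
  apply MonotoneOn.convexOn_of_deriv (convex_Ioi 0)
  · exact fun t ht => ((hfD t ht).differentiableAt).continuousAt.continuousWithinAt
  · rw [interior_Ioi]
    exact fun t ht => ((hfD t ht).differentiableAt).differentiableWithinAt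
  · rw [interior_Ioi]
    intro x hx y hy hxy
    rw [(hfD x hx).deriv, (hfD y hy).deriv]
    have hux : (0:ℝ) < x ^ (1/ℓ) := Real.rpow_pos_of_pos hx _
    have huy : (0:ℝ) < y ^ (1/ℓ) := Real.rpow_pos_of_pos hy _
    have hle : x ^ (1/ℓ) ≤ y ^ (1/ℓ) :=
      Real.rpow_le_rpow (le_of_lt hx) hxy (by positivity)
    have := hψmono hux huy hle
    have h1ℓ : (0:ℝ) ≤ 1/ℓ := by positivity
    exact mul_le_mul_of_nonneg_left this h1ℓ
end

section
/- Let ℓ>1, τ∈[0,1], and let z₁,z₂ ≥ 0 and g₁,g₂ ≥ 0 be real numbers. Set z₃ = (τ z₁^ℓ + (1−τ) z₂^ℓ)^{1/ℓ}. Then τ z₁^{ℓ−1} g₁ + (1−τ) z₂^{ℓ−1} g₂ ≤ z₃^{ℓ−1} · (τ g₁^ℓ + (1−τ) g₂^ℓ)^{1/ℓ}. -/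
open Real

theorem stmt5 (ℓ τ z₁ z₂ g₁ g₂ : ℝ) (hℓ : 1 < ℓ)
    (hτ0 : 0 ≤ τ) (hτ1 : τ ≤ 1)
    (hz₁ : 0 ≤ z₁) (hz₂ : 0 ≤ z₂) (hg₁ : 0 ≤ g₁) (hg₂ : 0 ≤ g₂) :
    τ * z₁ ^ (ℓ - 1) * g₁ + (1 - τ) * z₂ ^ (ℓ - 1) * g₂ ≤
      ((τ * z₁ ^ ℓ + (1 - τ) * z₂ ^ ℓ) ^ (1/ℓ)) ^ (ℓ - 1) *
        (τ * g₁ ^ ℓ + (1 - τ) * g₂ ^ ℓ) ^ (1/ℓ) := by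
  have hℓ0 : 0 < ℓ := lt_trans one_pos hℓ
  have hτ' : 0 ≤ 1 - τ := by linarith
  set p := ℓ / (ℓ - 1) with hp
  have hq : p.HolderConjugate ℓ := by
    refine Real.holderConjugate_iff.2 ⟨?_, ?_⟩
    · rw [hp, lt_div_iff₀ (by linarith)]; linarith
    · rw [hp]; field_simp; ring
  have hp0 : 0 < p := hq.pos
  have h1p : 1/p = (ℓ-1)/ℓ := by rw [hp]; field_simp
  set f : Fin 2 → ℝ := ![(τ * z₁ ^ ℓ) ^ (1/p), ((1 - τ) * z₂ ^ ℓ) ^ (1/p)] with hf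
  set g : Fin 2 → ℝ := ![(τ * g₁ ^ ℓ) ^ (1/ℓ), ((1 - τ) * g₂ ^ ℓ) ^ (1/ℓ)] with hg
  have key := Real.inner_le_Lp_mul_Lq_of_nonneg (s := Finset.univ) hq
    (f := f) (g := g)
    (fun i _ => by fin_cases i <;> simp [hf] <;> positivity)
    (fun i _ => by fin_cases i <;> simp [hg] <;> positivity)
  -- compute each term of the sums
  have hterm : ∀ (w z G : ℝ), 0 ≤ w → 0 ≤ z → 0 ≤ G →
      (w * z ^ ℓ) ^ (1/p) * (w * G ^ ℓ) ^ (1/ℓ) = w * z ^ (ℓ-1) * G := by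
    intro w z G hw hz hG
    rw [h1p, Real.mul_rpow hw (Real.rpow_nonneg hz ℓ),
        Real.mul_rpow hw (Real.rpow_nonneg hG ℓ),
        ← Real.rpow_mul hz, ← Real.rpow_mul hG]
    have e1 : ℓ * ((ℓ-1)/ℓ) = ℓ - 1 := by field_simp
    have e2 : ℓ * (1/ℓ) = 1 := by field_simp
    rw [e1, e2, Real.rpow_one]
    have hw1 : w ^ ((ℓ-1)/ℓ) * w ^ (1/ℓ) = w := by
      rw [← Real.rpow_add_of_nonneg hw (div_nonneg (by linarith) hℓ0.le) (by positivity)]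
      have : (ℓ-1)/ℓ + 1/ℓ = 1 := by field_simp; ring
      rw [this, Real.rpow_one]
    calc w ^ ((ℓ-1)/ℓ) * z ^ (ℓ-1) * (w ^ (1/ℓ) * G)
        = (w ^ ((ℓ-1)/ℓ) * w ^ (1/ℓ)) * (z ^ (ℓ-1) * G) := by ring
      _ = w * z ^ (ℓ-1) * G := by rw [hw1]; ring
  have hpowp : ∀ x : ℝ, 0 ≤ x → (x ^ (1/p)) ^ p = x := fun x hx => by
    rw [one_div, Real.rpow_inv_rpow hx hp0.ne']
  have hpowl : ∀ x : ℝ, 0 ≤ x → (x ^ (1/ℓ)) ^ ℓ = x := fun x hx => by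
    rw [one_div, Real.rpow_inv_rpow hx hℓ0.ne']
  rw [Fin.sum_univ_two, Fin.sum_univ_two, Fin.sum_univ_two] at key
  simp only [hf, hg, Matrix.cons_val_zero, Matrix.cons_val_one, Matrix.head_cons] at key
  rw [hterm τ z₁ g₁ hτ0 hz₁ hg₁, hterm (1-τ) z₂ g₂ hτ' hz₂ hg₂,
      hpowp _ (by positivity), hpowp _ (by positivity),
      hpowl _ (by positivity), hpowl _ (by positivity)] at key
  refine key.trans_eq ?_
  congr 1
  rw [← Real.rpow_mul (by positivity), show (1/ℓ)*(ℓ-1) = 1/p by rw [h1p]; field_simp]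
end
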